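/- Let y, x be real random variables and F a sub-σ-algebra such that E[y | F] is measurable. If E[y|X] is a measurable function of T(X) for a measurable map T, then Cov(y, E[y|X] | T(X)) = 0. Conversely, if Cov(y, E[y|X] | T(X)) = 0 almost surely, then E[y|X] is (a.s. equal to) a measurable function of T(X), i.e., E[y|X] = E[y|T(X)] almost surely. -/

import Mathlib

/-!
For `m₁ ≤ m₂` and `g = E[y | m₂]`, the tower and pull-out properties give
`E[y g | m₁] = E[g² | m₁]` and `E[g | m₁] = E[y | m₁]`, so `Cov(y, g | m₁) = Var(g | m₁)`.
A conditional variance integrates to `E[(g - E[g | m₁])²]`, hence it vanishes a.s. exactly when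
`g = E[g | m₁] = E[y | m₁]` a.s. Here `m₂` is generated by `X` and `m₁` by `T ∘ X`.
-/

open MeasureTheory ProbabilityTheory

namespace ProbabilityTheory

variable {Ω : Type*} {m₀ m m₁ m₂ : MeasurableSpace Ω} {μ : Measure[m₀] Ω} {X y : Ω → ℝ}

noncomputable def condCov (m : MeasurableSpace Ω) (X Y : Ω → ℝ) (μ : Measure[m₀] Ω) : Ω → ℝ :=
  μ[X * Y | m] - μ[X | m] * μ[Y | m]

lemma condVar_ae_eq_zero_iff (hm : m ≤ m₀) [IsFiniteMeasure μ] (hX : MemLp X 2 μ) :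
    Var[X; μ | m] =ᵐ[μ] 0 ↔ X =ᵐ[μ] μ[X | m] := by
  have hsq : Integrable ((X - μ[X | m]) ^ 2) μ := (hX.sub (hX.condExp one_le_two)).integrable_sq
  constructor
  · intro hvar
    have hint : ∫ ω, ((X - μ[X | m]) ^ 2) ω ∂μ = 0 := by
      rw [← integral_condExp hm, ← condVar, integral_congr_ae hvar, Pi.zero_def, integral_zero]
    filter_upwards [(integral_eq_zero_iff_of_nonneg (fun _ ↦ sq_nonneg _) hsq).mp hint]
      with ω hω
    simpa [sub_eq_zero] using hω
  · intro hXeq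
    have hzero : (X - μ[X | m]) ^ 2 =ᵐ[μ] 0 := by
      filter_upwards [hXeq] with ω hω
      simp [← hω]
    simpa [condVar] using condExp_congr_ae (m := m) hzero

lemma condExp_mul_condExp_ae_eq_condExp_sq (hle : m₁ ≤ m₂) (hm₂ : m₂ ≤ m₀) [IsFiniteMeasure μ]
    (hy : MemLp y 2 μ) :
    μ[y * μ[y | m₂] | m₁] =ᵐ[μ] μ[μ[y | m₂] ^ 2 | m₁] := by
  have hpull : μ[y * μ[y | m₂] | m₂] =ᵐ[μ] μ[y | m₂] ^ 2 := by
    rw [sq]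
    exact condExp_mul_of_stronglyMeasurable_right stronglyMeasurable_condExp
      (hy.integrable_mul (hy.condExp one_le_two)) (hy.integrable one_le_two)
  exact (condExp_condExp_of_le hle hm₂).symm.trans (condExp_congr_ae hpull)

lemma condCov_condExp_ae_eq_condVar (hle : m₁ ≤ m₂) (hm₂ : m₂ ≤ m₀) [IsFiniteMeasure μ]
    (hy : MemLp y 2 μ) :
    condCov m₁ y (μ[y | m₂]) μ =ᵐ[μ] Var[μ[y | m₂]; μ | m₁] := by
  filter_upwards [condExp_mul_condExp_ae_eq_condExp_sq hle hm₂ hy,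
    condExp_condExp_of_le (μ := μ) (f := y) hle hm₂,
    condVar_ae_eq_condExp_sq_sub_sq_condExp (hle.trans hm₂) (hy.condExp one_le_two)]
    with ω hmul htower hvar
  simp only [condCov, Pi.sub_apply, Pi.mul_apply, Pi.pow_apply] at hmul htower hvar ⊢
  rw [hmul, hvar, htower]
  ring

theorem condExp_ae_eq_condExp_iff_condCov_ae_eq_zero (hle : m₁ ≤ m₂) (hm₂ : m₂ ≤ m₀)
    [IsFiniteMeasure μ] (hy : MemLp y 2 μ) :
    μ[y | m₂] =ᵐ[μ] μ[y | m₁] ↔ condCov m₁ y (μ[y | m₂]) μ =ᵐ[μ] 0 := by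
  rw [(condCov_condExp_ae_eq_condVar hle hm₂ hy).congr_left,
    condVar_ae_eq_zero_iff (hle.trans hm₂) (hy.condExp one_le_two)]
  exact ⟨fun h ↦ h.trans (condExp_condExp_of_le hle hm₂).symm,
    fun h ↦ h.trans (condExp_condExp_of_le hle hm₂)⟩

end ProbabilityTheory

/-- `E[y|X]` is (a.s.) a measurable function of `T(X)` — i.e. it coincides a.s.
with `E[y|T(X)]` — if and only if `Cov(y, E[y|X] | T(X)) = 0` almost surely. -/
theorem stmt16 {Ω E F : Type*} [MeasurableSpace E] [MeasurableSpace F]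
    {m0 : MeasurableSpace Ω} (μ : Measure Ω) [IsProbabilityMeasure μ]
    (y : Ω → ℝ) (X : Ω → E) (T : E → F) (hX : Measurable X) (hT : Measurable T)
    (hy : MemLp y 2 μ) :
    (μ[y | MeasurableSpace.comap X inferInstance] =ᵐ[μ]
        μ[y | MeasurableSpace.comap (T ∘ X) inferInstance]) ↔
      (fun ω =>
          (μ[fun ω' => y ω' * (μ[y | MeasurableSpace.comap X inferInstance]) ω' |
              MeasurableSpace.comap (T ∘ X) inferInstance]) ω -
            (μ[y | MeasurableSpace.comap (T ∘ X) inferInstance]) ω *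
              (μ[μ[y | MeasurableSpace.comap X inferInstance] |
                MeasurableSpace.comap (T ∘ X) inferInstance]) ω) =ᵐ[μ]
        (fun _ => (0 : ℝ)) := by
  have hle : MeasurableSpace.comap (T ∘ X) inferInstance ≤
      MeasurableSpace.comap X inferInstance := by
    rw [← MeasurableSpace.comap_comp]
    exact MeasurableSpace.comap_mono hT.comap_le
  exact condExp_ae_eq_condExp_iff_condCov_ae_eq_zero hle hX.comap_le hy
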